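/- For every φ ∈ AS¹(ℝ) one has ‖φ‖_[Λ] = (sup_t φ(t)) − (inf_t φ(t)). -/

import Mathlib

open MeasureTheory Set

noncomputable section

/-- The function `S` of the paper. -/
def Sfun (t : ℝ) : ℝ :=
  if t ≤ -1 then 0
  else if t ≤ 0 then (t + 1) ^ 2 / 2
  else if t ≤ 1 then 1 - (t - 1) ^ 2 / 2
  else 1

/-- The function `Λ` of the paper. -/
def Lam (t : ℝ) : ℝ := Sfun (t + 1) - Sfun (t - 1)

/-- Almost sigmoidal functions of class `C¹`. -/
def AS1 (φ : ℝ → ℝ) : Prop :=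
  ContDiff ℝ 1 φ ∧
    ∃ a b : ℝ, a ≤ b ∧ (∀ t ≤ a, φ t = 0) ∧ ∀ t, b ≤ t → φ t = φ b

/-- Orientation-preserving `C¹`-diffeomorphisms of `ℝ`. -/
def OPDiffeo (h : ℝ → ℝ) : Prop :=
  ContDiff ℝ 1 h ∧ Function.Bijective h ∧
    (∃ g : ℝ → ℝ, ContDiff ℝ 1 g ∧ Function.LeftInverse g h ∧ Function.RightInverse g h) ∧
    ∀ t, 0 < deriv h t

/-- Total variation `V_φ = ∫ |φ'|`. -/
def totalVar (φ : ℝ → ℝ) : ℝ := ∫ t, |deriv φ t|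

/-- A reparametrization invariant norm on `AS¹(ℝ)`. -/
structure IsRPINorm (N : (ℝ → ℝ) → ℝ) : Prop where
  nonneg : ∀ φ, AS1 φ → 0 ≤ N φ
  eq_zero_iff : ∀ φ, AS1 φ → (N φ = 0 ↔ ∀ t, φ t = 0)
  smul : ∀ (c : ℝ) (φ : ℝ → ℝ), AS1 φ → N (fun t => c * φ t) = |c| * N φ
  triangle : ∀ φ ψ : ℝ → ℝ, AS1 φ → AS1 ψ → N (fun t => φ t + ψ t) ≤ N φ + N ψ
  invariant : ∀ (φ h : ℝ → ℝ), AS1 φ → OPDiffeo h → N (φ ∘ h) = N φ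

/-- The standard RPI-norm `‖φ‖_[ψ]`. -/
def stdNorm (ψ φ : ℝ → ℝ) : ℝ :=
  ⨆ h : {h : ℝ → ℝ // OPDiffeo h}, |∫ t, φ (-t) * deriv (ψ ∘ h.1) t|

/-- The function `S_n`. -/
def Sn (n : ℕ) : ℝ → ℝ := fun t => ∑ i ∈ Finset.range n, (-1 : ℝ) ^ i * Sfun (t - 2 * (i : ℝ))

/-- The function `L_n`. -/
def Lfun (n : ℕ) : ℝ → ℝ := fun t => ∑ i ∈ Finset.range n, (-1 : ℝ) ^ i * Lam (t - 4 * (i : ℝ))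

/-- `W` is a separating set for `f`: `f` is monotone on each connected component of `ℝ \ W`. -/
def IsSepSet (f : ℝ → ℝ) (W : Finset ℝ) : Prop :=
  ∀ t, t ∉ (W : Set ℝ) →
    MonotoneOn f (connectedComponentIn ((W : Set ℝ)ᶜ) t) ∨
      AntitoneOn f (connectedComponentIn ((W : Set ℝ)ᶜ) t)

/-- `f` is piecewise monotone. -/
def PiecewiseMonotone (f : ℝ → ℝ) : Prop := ∃ W : Finset ℝ, IsSepSet f W

/-- `l(f)`: the minimum cardinality of a separating set for `f`. -/
def lval (f : ℝ → ℝ) : ℕ := sInf {n : ℕ | ∃ W : Finset ℝ, W.card = n ∧ IsSepSet f W}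

/-!
Substituting `t = g s`, where `g` is the inverse of the diffeomorphism `h`, turns the pairing into
`∫_{-2}^{2} φ(-g s) Λ'(s) ds`. As `Λ' ≥ 0` with mass `1` on `[-2, 0]` and `Λ' ≤ 0` with mass `-1`
on `[0, 2]`, this is a difference of two weighted averages of values of `φ`, hence at most
`sup φ - inf φ`. Conversely, for `y < x` let `g` be a `C¹` increasing approximation of the step
from `-x` to `-y` at `0`; by dominated convergence the pairing tends to `φ x - φ y`.
-/

open Filter Topology Interval

def hat (t : ℝ) : ℝ := max 0 (1 - |t|)

def lamDeriv (t : ℝ) : ℝ := hat (t + 1) - hat (t - 1)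

lemma continuous_hat : Continuous hat := by
  unfold hat; fun_prop

lemma continuous_lamDeriv : Continuous lamDeriv :=
  (continuous_hat.comp (by fun_prop)).sub (continuous_hat.comp (by fun_prop))

lemma hat_eq_zero {t : ℝ} (ht : 1 ≤ |t|) : hat t = 0 :=
  max_eq_left (by linarith)

lemma hasDerivAt_max_zero_sq (x : ℝ) : HasDerivAt (fun y => max y 0 ^ 2) (2 * max x 0) x := by
  refine hasDerivAt_of_hasDerivAt_of_ne' (x := 0) (f := fun y => max y 0 ^ 2)
    (g := fun y => 2 * max y 0) (fun y hy => ?_) (by fun_prop) (by fun_prop) x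
  rcases hy.lt_or_gt with hy | hy
  · rw [max_eq_right hy.le, mul_zero]
    refine (hasDerivAt_const y (0 : ℝ)).congr_of_eventuallyEq ?_
    filter_upwards [Iio_mem_nhds hy] with z hz
    simp [max_eq_right (mem_Iio.1 hz).le]
  · rw [max_eq_left hy.le]
    have hsq : HasDerivAt (· ^ 2) (2 * y) y := by simpa using hasDerivAt_pow 2 y
    refine hsq.congr_of_eventuallyEq ?_
    filter_upwards [Ioi_mem_nhds hy] with z hz
    rw [max_eq_left (mem_Ioi.1 hz).le]

lemma Sfun_eq_spline (t : ℝ) :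
    Sfun t = (max (t + 1) 0 ^ 2 - 2 * max t 0 ^ 2 + max (t - 1) 0 ^ 2) / 2 := by
  unfold Sfun; simp only [max_def]; split_ifs <;> linarith

lemma hat_eq_spline_deriv (t : ℝ) : hat t = max (t + 1) 0 - 2 * max t 0 + max (t - 1) 0 := by
  unfold hat; simp only [max_def, abs_eq_max_neg]; split_ifs <;> linarith

lemma hasDerivAt_Sfun (t : ℝ) : HasDerivAt Sfun (hat t) t := by
  have h := (((hasDerivAt_max_zero_sq (t + 1)).comp_add_const t 1).sub
    ((hasDerivAt_max_zero_sq t).const_mul 2) |>.add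
    ((hasDerivAt_max_zero_sq (t - 1)).comp_sub_const t 1)).div_const 2
  refine (h.congr_deriv ?_).congr_of_eventuallyEq (Eventually.of_forall Sfun_eq_spline)
  rw [hat_eq_spline_deriv]; ring

lemma contDiff_Sfun : ContDiff ℝ 1 Sfun := by
  rw [contDiff_one_iff_deriv, funext fun t => (hasDerivAt_Sfun t).deriv]
  exact ⟨fun t => (hasDerivAt_Sfun t).differentiableAt, continuous_hat⟩

lemma Sfun_of_le {t : ℝ} (ht : t ≤ -1) : Sfun t = 0 := if_pos ht

lemma Sfun_of_ge {t : ℝ} (ht : 1 ≤ t) : Sfun t = 1 := by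
  unfold Sfun; split_ifs <;> nlinarith

lemma Sfun_mem_Icc (t : ℝ) : Sfun t ∈ Icc 0 1 := by
  unfold Sfun; split_ifs <;> constructor <;> nlinarith

lemma hasDerivAt_Lam (t : ℝ) : HasDerivAt Lam (lamDeriv t) t :=
  ((hasDerivAt_Sfun (t + 1)).comp_add_const t 1).sub ((hasDerivAt_Sfun (t - 1)).comp_sub_const t 1)

lemma lamDeriv_eq_zero {t : ℝ} (ht : 2 ≤ |t|) : lamDeriv t = 0 := by
  have h₁ : |t| ≤ |t + 1| + 1 := by simpa using abs_sub (t + 1) 1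
  have h₂ : |t| ≤ |t - 1| + 1 := by simpa using abs_add_le (t - 1) 1
  rw [lamDeriv, hat_eq_zero (by linarith), hat_eq_zero (by linarith), sub_zero]

lemma support_lamDeriv : Function.support lamDeriv ⊆ Ioo (-2) 2 := fun t ht => by
  by_contra hout
  rw [mem_Ioo, ← abs_lt, not_lt] at hout
  exact ht (lamDeriv_eq_zero hout)

lemma lamDeriv_nonneg {t : ℝ} (ht : t ≤ 0) : 0 ≤ lamDeriv t := by
  rw [lamDeriv, hat_eq_zero (t := t - 1) (le_abs.2 (Or.inr (by linarith))), sub_zero]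
  exact le_max_left _ _

lemma lamDeriv_nonpos {t : ℝ} (ht : 0 ≤ t) : lamDeriv t ≤ 0 := by
  rw [lamDeriv, hat_eq_zero (t := t + 1) (le_abs.2 (Or.inl (by linarith))), zero_sub, neg_nonpos]
  exact le_max_left _ _

lemma integral_lamDeriv (a b : ℝ) : ∫ s in a..b, lamDeriv s = Lam b - Lam a :=
  intervalIntegral.integral_eq_sub_of_hasDerivAt (fun t _ => hasDerivAt_Lam t)
    (continuous_lamDeriv.intervalIntegrable a b)

lemma integral_lamDeriv_neg_two_zero : ∫ s in (-2)..0, lamDeriv s = 1 := by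
  norm_num [integral_lamDeriv, Lam, Sfun]

lemma integral_lamDeriv_zero_two : ∫ s in 0..2, lamDeriv s = -1 := by
  norm_num [integral_lamDeriv, Lam, Sfun]

lemma integral_mul_mem_Icc {F w : ℝ → ℝ} {a b m M : ℝ} (hab : a ≤ b) (hFc : Continuous F)
    (hwc : Continuous w) (hF : ∀ x ∈ Icc a b, F x ∈ Icc m M) (hw : ∀ x ∈ Icc a b, 0 ≤ w x) :
    ∫ x in a..b, F x * w x ∈ Icc (m * ∫ x in a..b, w x) (M * ∫ x in a..b, w x) := by
  rw [← intervalIntegral.integral_const_mul, ← intervalIntegral.integral_const_mul]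
  constructor
  · refine intervalIntegral.integral_mono_on hab ((hwc.const_mul m).intervalIntegrable _ _)
      ((hFc.mul hwc).intervalIntegrable _ _) fun x hx => ?_
    exact mul_le_mul_of_nonneg_right (hF x hx).1 (hw x hx)
  · refine intervalIntegral.integral_mono_on hab ((hFc.mul hwc).intervalIntegrable _ _)
      ((hwc.const_mul M).intervalIntegrable _ _) fun x hx => ?_
    exact mul_le_mul_of_nonneg_right (hF x hx).2 (hw x hx)

lemma abs_integral_mul_lamDeriv_le {F : ℝ → ℝ} {m M : ℝ} (hFc : Continuous F)
    (hF : ∀ x, F x ∈ Icc m M) : |∫ s in (-2)..2, F s * lamDeriv s| ≤ M - m := by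
  have hleft := integral_mul_mem_Icc (a := -2) (b := 0) (by norm_num) hFc continuous_lamDeriv
    (fun x _ => hF x) fun x hx => lamDeriv_nonneg hx.2
  have hright := integral_mul_mem_Icc (a := 0) (b := 2) (w := fun x => -lamDeriv x) (by norm_num)
    hFc continuous_lamDeriv.neg (fun x _ => hF x) fun x hx => neg_nonneg.2 (lamDeriv_nonpos hx.1)
  simp only [intervalIntegral.integral_neg, mul_neg, integral_lamDeriv_neg_two_zero,
    integral_lamDeriv_zero_two] at hleft hright
  rw [← intervalIntegral.integral_add_adjacent_intervals (b := 0) (f := fun s => F s * lamDeriv s)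
    ((hFc.mul continuous_lamDeriv).intervalIntegrable _ _)
    ((hFc.mul continuous_lamDeriv).intervalIntegrable _ _), abs_le]
  constructor <;> linarith [hleft.1, hleft.2, hright.1, hright.2]

lemma integral_mul_deriv_comp_eq {f ψ ψ' h g : ℝ → ℝ} {a b : ℝ} (hf : Continuous f)
    (hψ : ∀ x, HasDerivAt ψ (ψ' x) x) (hψ' : Continuous ψ') (hsupp : Function.support ψ' ⊆ Ioo a b)
    (hh : ContDiff ℝ 1 h) (hmono : Monotone h) (hg : ContDiff ℝ 1 g)
    (hhg : Function.LeftInverse h g) :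
    ∫ t, f t * deriv (ψ ∘ h) t = ∫ s in a..b, f (g s) * ψ' s := by
  have hh' : ∀ t, HasDerivAt h (deriv h t) t := fun t =>
    (hh.differentiable one_ne_zero t).hasDerivAt
  have hg' : ∀ s, HasDerivAt g (deriv g s) s := fun s =>
    (hg.differentiable one_ne_zero s).hasDerivAt
  set F : ℝ → ℝ := fun t => f t * (ψ' (h t) * deriv h t)
  have hF : Continuous F := hf.mul ((hψ'.comp hh.continuous).mul (hh.continuous_deriv le_rfl))
  have hderiv : ∀ t, deriv (ψ ∘ h) t = ψ' (h t) * deriv h t := fun t =>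
    ((hψ (h t)).comp t (hh' t)).deriv
  have hFsupp : Function.support F ⊆ Ioc (g a) (g b) := fun t ht => by
    by_contra hout
    have hht : h t ∉ Ioo a b := by
      rcases not_and_or.1 hout with hta | htb
      · exact fun hmem => hmem.1.not_ge (hhg a ▸ hmono (not_lt.1 hta))
      · exact fun hmem => hmem.2.not_ge (hhg b ▸ hmono (not_le.1 htb).le)
    exact ht (by simp [F, Function.notMem_support.1 (mt (@hsupp _) hht)])
  have hchain : ∀ s, deriv h (g s) * deriv g s = 1 := fun s => by
    have hid : HasDerivAt (h ∘ g) 1 s := by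
      simpa [Function.comp_def, hhg _] using hasDerivAt_id' s
    exact ((hh' (g s)).comp s (hg' s)).unique hid
  calc ∫ t, f t * deriv (ψ ∘ h) t = ∫ t in g a..g b, F t := by
        simp_rw [hderiv]
        exact (intervalIntegral.integral_eq_integral_of_support_subset hFsupp).symm
    _ = ∫ s in a..b, (F ∘ g) s * deriv g s :=
        (intervalIntegral.integral_comp_mul_deriv (fun s _ => hg' s)
          (hg.continuous_deriv le_rfl).continuousOn hF).symm
    _ = ∫ s in a..b, f (g s) * ψ' s := by
        refine intervalIntegral.integral_congr fun s _ => ?_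
        simp only [Function.comp_apply, F, hhg s, mul_assoc, hchain, mul_one]

lemma exists_opDiffeo_leftInverse {g g' : ℝ → ℝ} (hg : ContDiff ℝ 1 g)
    (hg' : ∀ x, HasDerivAt g (g' x) x) (hpos : ∀ x, 0 < g' x) (hsurj : Function.Surjective g) :
    ∃ h, OPDiffeo h ∧ Function.LeftInverse h g := by
  have hmono : StrictMono g := strictMono_of_deriv_pos fun x => (hg' x).deriv ▸ hpos x
  set e : ℝ ≃o ℝ := StrictMono.orderIsoOfSurjective g hmono hsurj
  have he : ⇑e.toHomeomorph = g := StrictMono.coe_orderIsoOfSurjective g hmono hsurj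
  have hderiv : ∀ t, HasDerivAt e.symm (g' (e.symm t))⁻¹ t := fun t =>
    (hg' _).of_local_left_inverse e.symm.continuous.continuousAt (hpos _).ne'
      (Eventually.of_forall e.apply_symm_apply)
  refine ⟨e.symm, ⟨?_, e.symm.bijective, ⟨g, hg, e.apply_symm_apply, e.symm_apply_apply⟩, ?_⟩,
    e.symm_apply_apply⟩
  · exact e.toHomeomorph.contDiff_symm_deriv (fun x => (hpos x).ne') (he ▸ hg') (he ▸ hg)
  · exact fun t => (hderiv t).deriv ▸ inv_pos.2 (hpos _)

/-- For `ε > 0` and `u ≤ v`, an increasing `C¹` diffeomorphism approximating, as `ε → 0⁺`, the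
step from `u` to `v` at `0`. -/
def approxStep (u v ε s : ℝ) : ℝ := ε * s + u + (v - u) * Sfun (s / ε)

section approxStep

variable {u v ε : ℝ}

lemma contDiff_approxStep : ContDiff ℝ 1 (approxStep u v ε) :=
  ((contDiff_const.mul contDiff_id).add contDiff_const).add
    (contDiff_const.mul (contDiff_Sfun.comp (contDiff_id.div_const ε)))

lemma hasDerivAt_approxStep (s : ℝ) :
    HasDerivAt (approxStep u v ε) (ε + (v - u) * (hat (s / ε) / ε)) s := by
  have h := (((hasDerivAt_id s).const_mul ε).add_const u).add
    (((hasDerivAt_Sfun (s / ε)).comp s ((hasDerivAt_id s).div_const ε)).const_mul (v - u))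
  exact h.congr_deriv (by ring)

lemma surjective_approxStep (hε : 0 < ε) (huv : u ≤ v) :
    Function.Surjective (approxStep u v ε) := by
  have hlin : ∀ w, Tendsto (fun s => ε * s + w) atTop atTop ∧
      Tendsto (fun s => ε * s + w) atBot atBot :=
    fun w => ⟨tendsto_atTop_add_const_right _ w (tendsto_id.const_mul_atTop hε),
      tendsto_atBot_add_const_right _ w (tendsto_id.const_mul_atBot hε)⟩
  refine contDiff_approxStep.continuous.surjective
    (tendsto_atTop_mono (fun s => ?_) (hlin u).1) (tendsto_atBot_mono (fun s => ?_) (hlin v).2)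
  · have := (Sfun_mem_Icc (s / ε)).1
    unfold approxStep; nlinarith
  · have := (Sfun_mem_Icc (s / ε)).2
    unfold approxStep; nlinarith

lemma exists_opDiffeo_leftInverse_approxStep (hε : 0 < ε) (huv : u ≤ v) :
    ∃ h, OPDiffeo h ∧ Function.LeftInverse h (approxStep u v ε) :=
  exists_opDiffeo_leftInverse contDiff_approxStep hasDerivAt_approxStep
    (fun _ => add_pos_of_pos_of_nonneg hε
      (mul_nonneg (sub_nonneg.2 huv) (div_nonneg (le_max_left _ _) hε.le)))
    (surjective_approxStep hε huv)

lemma tendsto_approxStep_of_neg {s : ℝ} (hs : s < 0) :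
    Tendsto (fun ε => approxStep u v ε s) (𝓝[>] 0) (𝓝 u) := by
  have hlin : Tendsto (fun ε => ε * s + u) (𝓝[>] 0) (𝓝 u) :=
    (Continuous.tendsto' (by fun_prop) 0 u (by simp)).mono_left nhdsWithin_le_nhds
  refine hlin.congr' ?_
  filter_upwards [Ioo_mem_nhdsGT (neg_pos.2 hs)] with ε hε
  rw [approxStep, Sfun_of_le ((div_le_iff₀ hε.1).2 (by linarith [hε.2])), mul_zero, add_zero]

lemma tendsto_approxStep_of_pos {s : ℝ} (hs : 0 < s) :
    Tendsto (fun ε => approxStep u v ε s) (𝓝[>] 0) (𝓝 v) := by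
  have hlin : Tendsto (fun ε => ε * s + v) (𝓝[>] 0) (𝓝 v) :=
    (Continuous.tendsto' (by fun_prop) 0 v (by simp)).mono_left nhdsWithin_le_nhds
  refine hlin.congr' ?_
  filter_upwards [Ioo_mem_nhdsGT hs] with ε hε
  rw [approxStep, Sfun_of_ge ((le_div_iff₀ hε.1).2 (by linarith [hε.2]))]
  ring

end approxStep

lemma tendsto_integral_comp_mul {F w : ℝ → ℝ} {G : ℝ → ℝ → ℝ} {l : Filter ℝ}
    [l.IsCountablyGenerated] {K a b c : ℝ} (hF : Continuous F) (hFK : ∀ x, |F x| ≤ K)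
    (hw : Continuous w) (hG : ∀ ε, Continuous (G ε))
    (hlim : ∀ᵐ s, s ∈ Ι a b → Tendsto (fun ε => G ε s) l (𝓝 c)) :
    Tendsto (fun ε => ∫ s in a..b, F (G ε s) * w s) l (𝓝 (F c * ∫ s in a..b, w s)) := by
  rw [← intervalIntegral.integral_const_mul]
  refine intervalIntegral.tendsto_integral_filter_of_dominated_convergence (fun s => K * |w s|)
    (Eventually.of_forall fun ε => ((hF.comp (hG ε)).mul hw).aestronglyMeasurable)
    (Eventually.of_forall fun ε => ae_of_all _ fun s _ => ?_)
    ((continuous_const.mul hw.abs).intervalIntegrable _ _)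
    (hlim.mono fun s hs hmem => ((hF.tendsto c).comp (hs hmem)).mul_const _)
  rw [norm_mul, Real.norm_eq_abs, Real.norm_eq_abs]
  exact mul_le_mul_of_nonneg_right (hFK _) (abs_nonneg _)

lemma ciSup_sub_ciInf_le {ι : Type*} [Nonempty ι] {f : ι → ℝ} {c : ℝ}
    (h : ∀ i j, f i - f j ≤ c) : (⨆ i, f i) - ⨅ i, f i ≤ c :=
  sub_le_iff_le_add.2 <| ciSup_le fun i => sub_le_iff_le_add'.1 <| le_ciInf fun j => by
    linarith [h i j]

lemma OPDiffeo.monotone {h : ℝ → ℝ} (hh : OPDiffeo h) : Monotone h :=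
  (strictMono_of_deriv_pos hh.2.2.2).monotone

lemma integral_mul_deriv_Lam_comp_eq {f h g : ℝ → ℝ} (hf : Continuous f) (hh : OPDiffeo h)
    (hg : ContDiff ℝ 1 g) (hhg : Function.LeftInverse h g) :
    ∫ t, f t * deriv (Lam ∘ h) t = ∫ s in (-2)..2, f (g s) * lamDeriv s :=
  integral_mul_deriv_comp_eq hf hasDerivAt_Lam continuous_lamDeriv support_lamDeriv hh.1
    hh.monotone hg hhg

namespace AS1

variable {φ : ℝ → ℝ} (hφ : AS1 φ)
include hφ

lemma exists_abs_le : ∃ K, ∀ t, |φ t| ≤ K := by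
  obtain ⟨hc, a, b, hab, hleft, hright⟩ := hφ
  obtain ⟨K, hK⟩ := (isCompact_Icc (a := a) (b := b)).exists_bound_of_continuousOn
    hc.continuous.continuousOn
  have hrange : ∀ t, ∃ t' ∈ Icc a b, φ t = φ t' := fun t => by
    rcases le_total t a with hta | hat
    · exact ⟨a, ⟨le_rfl, hab⟩, by rw [hleft t hta, hleft a le_rfl]⟩
    rcases le_total t b with htb | hbt
    · exact ⟨t, ⟨hat, htb⟩, rfl⟩
    · exact ⟨b, ⟨hab, le_rfl⟩, hright t hbt⟩
  refine ⟨K, fun t => ?_⟩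
  obtain ⟨t', ht', heq⟩ := hrange t
  simpa [heq] using hK t' ht'

lemma mem_Icc_iInf_iSup (t : ℝ) : φ t ∈ Icc (⨅ t, φ t) (⨆ t, φ t) := by
  obtain ⟨K, hK⟩ := hφ.exists_abs_le
  exact ⟨ciInf_le ⟨-K, forall_mem_range.2 fun s => (abs_le.1 (hK s)).1⟩ t,
    le_ciSup ⟨K, forall_mem_range.2 fun s => (abs_le.1 (hK s)).2⟩ t⟩

lemma abs_integral_le_iSup_sub_iInf {h : ℝ → ℝ} (hh : OPDiffeo h) :
    |∫ t, φ (-t) * deriv (Lam ∘ h) t| ≤ (⨆ t, φ t) - ⨅ t, φ t := by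
  obtain ⟨g, hg, -, hhg⟩ := hh.2.2.1
  have hF : Continuous fun t => φ (-t) := hφ.1.continuous.comp continuous_neg
  rw [integral_mul_deriv_Lam_comp_eq hF hh hg hhg]
  exact abs_integral_mul_lamDeriv_le (hφ.1.continuous.comp (hg.continuous.neg))
    fun s => hφ.mem_Icc_iInf_iSup _

lemma stdNorm_Lam_le : stdNorm Lam φ ≤ (⨆ t, φ t) - ⨅ t, φ t :=
  Real.iSup_le (fun h => hφ.abs_integral_le_iSup_sub_iInf h.2)
    (sub_nonneg.2 ((hφ.mem_Icc_iInf_iSup 0).1.trans (hφ.mem_Icc_iInf_iSup 0).2))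

lemma abs_integral_le_stdNorm_Lam {h : ℝ → ℝ} (hh : OPDiffeo h) :
    |∫ t, φ (-t) * deriv (Lam ∘ h) t| ≤ stdNorm Lam φ :=
  le_ciSup (f := fun h : {h : ℝ → ℝ // OPDiffeo h} => |∫ t, φ (-t) * deriv (Lam ∘ h.1) t|)
    ⟨_, forall_mem_range.2 fun h => hφ.abs_integral_le_iSup_sub_iInf h.2⟩ ⟨h, hh⟩

lemma abs_sub_le_stdNorm_Lam_of_lt {x y : ℝ} (hxy : y < x) : |φ x - φ y| ≤ stdNorm Lam φ := by
  obtain ⟨K, hK⟩ := hφ.exists_abs_le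
  have hF : Continuous fun t => φ (-t) := hφ.1.continuous.comp continuous_neg
  have hint : ∀ ε a b, IntervalIntegrable (fun s => φ (-approxStep (-x) (-y) ε s) * lamDeriv s)
      volume a b := fun ε _ _ => ((hF.comp contDiff_approxStep.continuous).mul
        continuous_lamDeriv).intervalIntegrable _ _
  have hleft := tendsto_integral_comp_mul (a := -2) (b := 0) (c := -x) hF (fun _ => hK _)
    continuous_lamDeriv (G := approxStep (-x) (-y)) (fun _ => contDiff_approxStep.continuous) <| by
      filter_upwards [Measure.ae_ne volume 0] with s hs hmem
      rw [uIoc_of_le (by norm_num)] at hmem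
      exact tendsto_approxStep_of_neg (lt_of_le_of_ne hmem.2 hs)
  have hright := tendsto_integral_comp_mul (a := 0) (b := 2) (c := -y) hF (fun _ => hK _)
    continuous_lamDeriv (G := approxStep (-x) (-y)) (fun _ => contDiff_approxStep.continuous) <|
      ae_of_all _ fun s hmem => by
        rw [uIoc_of_le (by norm_num)] at hmem
        exact tendsto_approxStep_of_pos hmem.1
  rw [integral_lamDeriv_neg_two_zero] at hleft
  rw [integral_lamDeriv_zero_two] at hright
  have hlim : Tendsto (fun ε => ∫ s in (-2)..2, φ (-approxStep (-x) (-y) ε s) * lamDeriv s)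
      (𝓝[>] 0) (𝓝 (φ x - φ y)) := by
    refine ((hleft.add hright).congr fun ε => ?_).trans ?_
    · exact intervalIntegral.integral_add_adjacent_intervals (hint ε _ _) (hint ε _ _)
    · rw [neg_neg, neg_neg, mul_one, mul_neg_one, ← sub_eq_add_neg]
  have hle : ∀ᶠ ε in 𝓝[>] 0,
      |∫ s in (-2)..2, φ (-approxStep (-x) (-y) ε s) * lamDeriv s| ≤ stdNorm Lam φ := by
    filter_upwards [self_mem_nhdsWithin] with ε hε
    obtain ⟨h, hh, hhg⟩ := exists_opDiffeo_leftInverse_approxStep hε (neg_le_neg hxy.le)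
    rw [← integral_mul_deriv_Lam_comp_eq hF hh contDiff_approxStep hhg]
    exact hφ.abs_integral_le_stdNorm_Lam hh
  exact le_of_tendsto hlim.abs hle

lemma abs_sub_le_stdNorm_Lam (x y : ℝ) : |φ x - φ y| ≤ stdNorm Lam φ := by
  rcases lt_trichotomy y x with hyx | rfl | hxy
  · exact hφ.abs_sub_le_stdNorm_Lam_of_lt hyx
  · rw [sub_self, abs_zero]
    exact Real.iSup_nonneg fun _ => abs_nonneg _
  · exact abs_sub_comm (φ x) (φ y) ▸ hφ.abs_sub_le_stdNorm_Lam_of_lt hxy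

end AS1

theorem statement11 (φ : ℝ → ℝ) (hφ : AS1 φ) :
    stdNorm Lam φ = (⨆ t, φ t) - ⨅ t, φ t :=
  le_antisymm hφ.stdNorm_Lam_le <| ciSup_sub_ciInf_le fun x y =>
    (le_abs_self _).trans (hφ.abs_sub_le_stdNorm_Lam x y)
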